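/- arXiv:1805.01415 — 5 statements merged into one kernel-verified Lean document; each statement's English description precedes it below -/
import Mathlib

section
/- Any integral feasible solution x of the time-expanded arc-based TDTSP formulation (covering constraints: each vertex v ∈ V has total outgoing flow 1 over all its time copies; flow conservation at each non-source time-expanded vertex) induces combined flows x_{uv} = Σ_θ x_{uv,θ} that satisfy all subtour elimination constraints x(δ⁺(S)) ≥ 1 for every nonempty proper subset S ⊂ V. -/
/-- Arrival time after traversing the vertices of `rest` starting from `u` at time `θ`. -/
def arrival {n : ℕ} (c : Fin n → Fin n → ℕ → ℕ) : Fin n → ℕ → List (Fin n) → ℕ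
  | _, θ, [] => θ
  | u, θ, v :: rest => arrival c v (θ + c u v θ) rest

/-- A TDTSP tour: a Hamiltonian ordering of the vertices starting at the source `0`. -/
def IsTour (n : ℕ) [NeZero n] (L : List (Fin n)) : Prop :=
  L.Nodup ∧ L.length = n ∧ L.head? = some 0

/-- The arrival time of a tour back at the source, departing at time 0. -/
def tourArrival {n : ℕ} [NeZero n] (c : Fin n → Fin n → ℕ → ℕ) (L : List (Fin n)) : ℕ :=
  arrival c 0 0 (L.tail ++ [0])

/-- The time-dependent triangle inequality. -/
def TriIneq {n : ℕ} (c : Fin n → Fin n → ℕ → ℕ) (θmax : ℕ) : Prop :=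
  ∀ u v w θ, θ + c u v θ ≤ θmax → c u w θ ≤ c u v θ + c v w (θ + c u v θ)

/-- The cyclically consecutive pairs (the arcs) of a cyclic vertex list. -/
def cyclePairs {α : Type*} (L : List α) : List (α × α) := L.zip (L.tail ++ L.take 1)

/-- A Hamiltonian cycle of an undirected graph, as a cyclic vertex list. -/
def IsHamCycle {n : ℕ} (G : SimpleGraph (Fin n)) (L : List (Fin n)) : Prop :=
  L.Nodup ∧ L.length = n ∧ ∀ p ∈ cyclePairs L, G.Adj p.1 p.2

/-- The static (time-independent) cost of a cyclic vertex list. -/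
def staticTourCost {n : ℕ} (c : Fin n → Fin n → ℕ) (L : List (Fin n)) : ℕ :=
  ((cyclePairs L).map fun p => c p.1 p.2).sum

/-- Static costs: 1 on edges of `G`, 2 otherwise. -/
def cst {n : ℕ} (G : SimpleGraph (Fin n)) [DecidableRel G.Adj] (u v : Fin n) : ℕ :=
  if G.Adj u v then 1 else 2

/-- Any integral feasible solution of the time-expanded arc-based TDTSP
formulation (covering constraints and flow conservation at non-source time-expanded
vertices) induces combined flows `x_{uv} = Σ_θ x_{uv,θ}` satisfying every subtour
elimination constraint `x(δ⁺(S)) ≥ 1`. -/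
theorem integral_solution_satisfies_SECs (n θmax : ℕ) [NeZero n]
    (c : Fin n → Fin n → ℕ → ℕ) (hpos : ∀ (u v : Fin n) (θ : ℕ), 0 < c u v θ)
    (x : Fin n → Fin n → ℕ → ℕ)
    (hbin : ∀ (u v : Fin n) (θ : ℕ), x u v θ ≤ 1)
    (hloop : ∀ (v : Fin n) (θ : ℕ), x v v θ = 0)
    (hsupp : ∀ (u v : Fin n) (θ : ℕ), θmax < θ → x u v θ = 0)
    (hcover : ∀ v : Fin n, ∑ θ ∈ Finset.range (θmax + 1), ∑ w : Fin n, x v w θ = 1)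
    (hflow : ∀ v : Fin n, v ≠ 0 → ∀ θ : ℕ,
      (∑ w : Fin n, x v w θ) =
        ∑ w : Fin n, ∑ θ' ∈ Finset.range (θmax + 1),
          if θ' + c w v θ' = θ then x w v θ' else 0) :
    ∀ S : Finset (Fin n), S.Nonempty → S ≠ Finset.univ →
      1 ≤ ∑ u ∈ S, ∑ v ∈ Sᶜ, ∑ θ ∈ Finset.range (θmax + 1), x u v θ := by

  intro S hS hSne
  by_contra hcon
  push_neg at hcon
  have hzero : ∀ u ∈ S, ∀ v ∈ Sᶜ, ∀ θ : ℕ, x u v θ = 0 := by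
    intro u hu v hv θ
    by_cases hθ : θ ≤ θmax
    · have h0 : ∑ u ∈ S, ∑ v ∈ Sᶜ, ∑ θ ∈ Finset.range (θmax + 1), x u v θ = 0 := by
        omega
      have h1 := Finset.sum_eq_zero_iff.mp h0 u hu
      have h2 := Finset.sum_eq_zero_iff.mp h1 v hv
      exact Finset.sum_eq_zero_iff.mp h2 θ (Finset.mem_range.mpr (by omega))
    · exact hsupp u v θ (by omega)
  by_cases h0S : (0 : Fin n) ∈ S
  · -- 0 ∈ S : backward chain in Sᶜ with strictly decreasing departure times
    obtain ⟨v₀, hv₀⟩ : Sᶜ.Nonempty := by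
      rw [Finset.nonempty_iff_ne_empty]
      intro h; exact hSne (by rwa [Finset.compl_eq_empty_iff] at h)
    have key : ∀ θ : ℕ, ∀ v ∈ Sᶜ, (∑ w : Fin n, x v w θ) = 0 := by
      intro θ
      induction θ using Nat.strong_induction_on with
      | _ θ IH =>
        intro v hv
        by_contra hne
        have hv0 : v ≠ 0 := by
          intro e; exact (Finset.mem_compl.mp hv) (e ▸ h0S)
        rw [hflow v hv0 θ] at hne
        obtain ⟨w, -, hwne⟩ := Finset.exists_ne_zero_of_sum_ne_zero hne
        obtain ⟨θ', hθ', hne'⟩ := Finset.exists_ne_zero_of_sum_ne_zero hwne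
        have heq : θ' + c w v θ' = θ := by
          by_contra hne2; exact hne' (by simp [hne2])
        rw [if_pos heq] at hne'
        have hwS : w ∈ Sᶜ := by
          by_contra hwS
          exact hne' (hzero w (by simpa using hwS) v hv θ')
        have hlt : θ' < θ := by have := hpos w v θ'; omega
        have hz := IH θ' hlt w hwS
        have hle : x w v θ' ≤ ∑ w' : Fin n, x w w' θ' :=
          Finset.single_le_sum (f := fun w' => x w w' θ') (fun _ _ => Nat.zero_le _) (Finset.mem_univ v)
        omega
    have hc := hcover v₀
    rw [Finset.sum_eq_zero (fun θ _ => key θ v₀ hv₀)] at hc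
    exact absurd hc (by omega)
  · -- 0 ∉ S : forward chain in S with strictly increasing departure times
    have key : ∀ d θ : ℕ, θmax + 1 - θ ≤ d → ∀ v ∈ S, (∑ w : Fin n, x v w θ) = 0 := by
      intro d
      induction d with
      | zero =>
        intro θ hθ v hv
        exact Finset.sum_eq_zero fun w _ => hsupp v w θ (by omega)
      | succ d IH =>
        intro θ hθ v hv
        by_contra hne
        obtain ⟨w, -, hw⟩ := Finset.exists_ne_zero_of_sum_ne_zero hne
        have hθm : θ ≤ θmax := by
          by_contra hc2; exact hw (hsupp v w θ (by omega))
        have hwS : w ∈ S := by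
          by_contra hwc
          exact hw (hzero v hv w (Finset.mem_compl.mpr hwc) θ)
        have hw0 : w ≠ 0 := fun e => h0S (e ▸ hwS)
        have hin : (∑ w' : Fin n, x w w' (θ + c v w θ)) ≠ 0 := by
          rw [hflow w hw0 (θ + c v w θ)]
          intro hz
          have h1 := Finset.sum_eq_zero_iff.mp hz v (Finset.mem_univ v)
          have h2 := Finset.sum_eq_zero_iff.mp h1 θ (Finset.mem_range.mpr (by omega))
          rw [if_pos rfl] at h2
          exact hw h2
        exact hin (IH (θ + c v w θ) (by have := hpos v w θ; omega) w hwS)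
    obtain ⟨v₀, hv₀⟩ := hS
    have hc := hcover v₀
    rw [Finset.sum_eq_zero (fun θ _ => key (θmax + 1) θ (by omega) v₀ hv₀)] at hc
    exact absurd hc (by omega)
end

section
/- The D_k^+ inequality Σ_{j=1}^{k−1} x_{v_j v_{j+1}} + x_{v_k v_1} + 2·x([{v_1}:{v_3,...,v_k}]) + Σ_{j=4}^{k} x([{v_j}:{v_3,...,v_{j−1}}]) ≤ k − 1 holds for the arc incidence vector x of every directed Hamiltonian cycle of a complete digraph on n vertices, for every sequence (v_1,...,v_k) of 2 ≤ k < n distinct vertices. -/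
private lemma dk_full {n : ℕ} (C : List (Fin n)) (hnd : C.Nodup) (hlen : C.length = n) :
    ∀ u : Fin n, u ∈ C := by
  intro u
  have h1 : C.toFinset = Finset.univ :=
    Finset.eq_univ_of_card _
      (by rw [List.toFinset_card_of_nodup hnd, hlen, Fintype.card_fin])
  rw [← List.mem_toFinset, h1]
  exact Finset.mem_univ u

private lemma dk_mem_cyclePairs {n : ℕ} (C : List (Fin n)) (hnd : C.Nodup)
    (hlen : C.length = n) (hn : 0 < n) (a b : Fin n) :
    ((a, b) ∈ cyclePairs C) ↔ C.formPerm a = b := by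
  have hrot : cyclePairs C = C.zip (C.rotate 1) := by
    rw [cyclePairs, List.rotate_eq_drop_append_take (by omega : 1 ≤ C.length), List.drop_one]
  rw [hrot]
  constructor
  · intro hmem
    obtain ⟨i, hi, hget⟩ := List.mem_iff_getElem.mp hmem
    have hi' : i < C.length := by
      simpa [List.length_zip, List.length_rotate] using hi
    rw [List.getElem_zip] at hget
    have h1 : C[i] = a := congrArg Prod.fst hget
    have h2 : (C.rotate 1)[i]'(by rw [List.length_rotate]; exact hi') = b :=
      congrArg Prod.snd hget
    rw [List.getElem_rotate] at h2
    rw [← h1, List.formPerm_apply_getElem C hnd i hi']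
    exact h2
  · intro hpa
    obtain ⟨i, hi, hci⟩ := List.getElem_of_mem (dk_full C hnd hlen a)
    apply List.mem_iff_getElem.mpr
    refine ⟨i, by simpa [List.length_zip, List.length_rotate] using hi, ?_⟩
    rw [List.getElem_zip, List.getElem_rotate]
    have := List.formPerm_apply_getElem C hnd i hi
    rw [hci] at this
    rw [hci, ← hpa, ← this]

private lemma dk_invariant_univ {n : ℕ} (C : List (Fin n)) (hnd : C.Nodup)
    (hlen : C.length = n) (T : Finset (Fin n)) (hne : T.Nonempty)
    (hinv : ∀ a ∈ T, C.formPerm a ∈ T) : T = Finset.univ := by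
  obtain ⟨b, hb⟩ := hne
  have hpow : ∀ m : ℕ, (C.formPerm ^ m) b ∈ T := by
    intro m
    induction m with
    | zero => simpa using hb
    | succ m ih =>
      rw [pow_succ', Equiv.Perm.mul_apply]
      exact hinv _ ih
  obtain ⟨i0, hi0, hb0⟩ := List.getElem_of_mem (dk_full C hnd hlen b)
  apply Finset.eq_univ_of_forall
  intro a
  obtain ⟨j, hj, ha⟩ := List.getElem_of_mem (dk_full C hnd hlen a)
  have hp := List.formPerm_pow_apply_getElem C hnd (j + (C.length - i0)) i0 hi0
  have e1 : (i0 + (j + (C.length - i0))) % C.length = j := by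
    rw [show i0 + (j + (C.length - i0)) = j + C.length by omega, Nat.add_mod_right,
      Nat.mod_eq_of_lt hj]
  rw [hb0] at hp
  have h2 := hpow (j + (C.length - i0))
  rw [hp] at h2
  rw [← ha]
  simpa [e1] using h2

private lemma dk_sum_indicator {n : ℕ} (v : ℕ → Fin n) (A : Finset ℕ)
    (hinj : ∀ i ∈ A, ∀ j ∈ A, v i = v j → i = j) (u : Fin n) :
    (∑ i ∈ A, if u = v i then 1 else 0) = if u ∈ A.image v then 1 else 0 := by
  by_cases h : u ∈ A.image v
  · obtain ⟨i0, hi0, hu⟩ := Finset.mem_image.mp h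
    rw [if_pos h, Finset.sum_eq_single_of_mem i0 hi0]
    · rw [if_pos hu.symm]
    · intro b hb hne
      apply if_neg
      intro he
      exact hne (hinj b hb i0 hi0 (he.symm.trans hu.symm))
  · rw [if_neg h, Finset.sum_eq_zero]
    intro i hi
    apply if_neg
    intro he
    exact h (Finset.mem_image.mpr ⟨i, hi, he.symm⟩)

private lemma dk_sum_le_card_sub (F : Finset ℕ) (f : ℕ → ℕ) (hf : ∀ j ∈ F, f j ≤ 1) :
    (∑ j ∈ F, f j) + (F.filter (fun j => f j = 0)).card ≤ F.card := by
  have h1 : (∑ j ∈ F, f j)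
      = (∑ j ∈ F.filter (fun j => f j = 0), f j)
        + ∑ j ∈ F.filter (fun j => ¬ f j = 0), f j :=
    (Finset.sum_filter_add_sum_filter_not F _ f).symm
  have h2 : (∑ j ∈ F.filter (fun j => f j = 0), f j) = 0 :=
    Finset.sum_eq_zero fun j hj => (Finset.mem_filter.mp hj).2
  have h3 : (∑ j ∈ F.filter (fun j => ¬ f j = 0), f j)
      ≤ (F.filter (fun j => ¬ f j = 0)).card := by
    calc (∑ j ∈ F.filter (fun j => ¬ f j = 0), f j)
        ≤ ∑ _j ∈ F.filter (fun j => ¬ f j = 0), 1 :=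
          Finset.sum_le_sum fun j hj => hf j (Finset.mem_filter.mp hj).1
      _ = (F.filter (fun j => ¬ f j = 0)).card := by simp
  have h4 := Finset.card_filter_add_card_filter_not (s := F) (fun j => f j = 0)
  omega

/-- The `D_k^+` inequality holds for the arc incidence vector of every
directed Hamiltonian cycle of the complete digraph on `n` vertices, for every sequence
`(v_0, …, v_{k-1})` of `2 ≤ k < n` distinct vertices (0-based indexing of the paper's
`(v_1, …, v_k)`). -/
theorem Dk_plus_inequality (n k : ℕ) (hk2 : 2 ≤ k) (hkn : k < n)
    (C : List (Fin n)) (hnd : C.Nodup) (hlen : C.length = n)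
    (v : ℕ → Fin n) (hv : ∀ i j, i < k → j < k → v i = v j → i = j) :
    let x : Fin n → Fin n → ℕ := fun a b => if (a, b) ∈ cyclePairs C then 1 else 0
    (∑ j ∈ Finset.range (k - 1), x (v j) (v (j + 1))) + x (v (k - 1)) (v 0)
      + 2 * ∑ i ∈ Finset.Ico 2 k, x (v 0) (v i)
      + ∑ j ∈ Finset.Ico 3 k, ∑ i ∈ Finset.Ico 2 j, x (v j) (v i) ≤ k - 1 := by
  intro x
  have hn : 0 < n := by omega
  set s : Equiv.Perm (Fin n) := C.formPerm with hs
  have hx : ∀ a b : Fin n, x a b = if s a = b then 1 else 0 := by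
    intro a b
    show (if (a, b) ∈ cyclePairs C then 1 else 0) = _
    by_cases h : s a = b
    · rw [if_pos ((dk_mem_cyclePairs C hnd hlen hn a b).mpr h), if_pos h]
    · rw [if_neg (fun hm => h ((dk_mem_cyclePairs C hnd hlen hn a b).mp hm)), if_neg h]
  simp only [hx]
  set S : Finset (Fin n) := (Finset.range k).image v with hS
  have hinj : ∀ A : Finset ℕ, A ⊆ Finset.range k →
      ∀ i ∈ A, ∀ j ∈ A, v i = v j → i = j := by
    intro A hA i hi j hj hij
    exact hv i j (Finset.mem_range.mp (hA hi)) (Finset.mem_range.mp (hA hj)) hij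
  set Hidx : ℕ → Finset ℕ :=
    fun j => insert (if j = k - 1 then 0 else j + 1) (Finset.Ico 2 j) with hHidx
  set T : ℕ → ℕ := fun j => if s (v j) ∈ (Hidx j).image v then 1 else 0 with hT
  set E : ℕ := if s (v 0) ∈ (Finset.Ico 2 k).image v then 1 else 0 with hE
  set g : ℕ → ℕ :=
    fun j => if s (v j) = (if j = k - 1 then v 0 else v (j + 1)) then 1 else 0 with hg
  set h : ℕ → ℕ := fun j => ∑ i ∈ Finset.Ico 2 j, if s (v j) = v i then 1 else 0 with hh
  have Hsub : ∀ j, 1 ≤ j → j < k → Hidx j ⊆ Finset.range k := by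
    intro j h1 h2 i hi
    simp only [hHidx, Finset.mem_insert, Finset.mem_Ico] at hi
    rcases hi with rfl | hi
    · rw [Finset.mem_range]; split_ifs with h' <;> omega
    · rw [Finset.mem_range]; omega
  have hTle : ∀ j, T j ≤ 1 := by
    intro j; simp only [hT]; split_ifs <;> omega
  have hgh : ∀ j ∈ Finset.Ico 1 k, g j + h j = T j := by
    intro j hj
    rw [Finset.mem_Ico] at hj
    have hnotmem : (if j = k - 1 then 0 else j + 1) ∉ Finset.Ico 2 j := by
      simp only [Finset.mem_Ico]; split_ifs <;> omega
    have e : g j + h j = ∑ i ∈ Hidx j, if s (v j) = v i then 1 else 0 := by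
      simp only [hHidx]
      rw [Finset.sum_insert hnotmem]
      simp only [hg, hh]
      congr 1
      rw [apply_ite v]
    rw [e, dk_sum_indicator v (Hidx j) (hinj _ (Hsub j hj.1 hj.2)) (s (v j))]
  have key : (∑ j ∈ Finset.range (k - 1), if s (v j) = v (j + 1) then 1 else 0)
      + (if s (v (k - 1)) = v 0 then 1 else 0)
      + 2 * (∑ i ∈ Finset.Ico 2 k, if s (v 0) = v i then 1 else 0)
      + (∑ j ∈ Finset.Ico 3 k, ∑ i ∈ Finset.Ico 2 j, if s (v j) = v i then 1 else 0)
      = ((if s (v 0) = v 1 then 1 else 0) + 2 * E) + ∑ j ∈ Finset.Ico 1 k, T j := by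
    have e1 : (∑ j ∈ Finset.range (k - 1), if s (v j) = v (j + 1) then 1 else 0)
        + (if s (v (k - 1)) = v 0 then 1 else 0) = ∑ j ∈ Finset.range k, g j := by
      have hsplit : ∑ j ∈ Finset.range k, g j
          = (∑ j ∈ Finset.range (k - 1), g j) + g (k - 1) := by
        conv_lhs => rw [show k = (k - 1) + 1 by omega]
        rw [Finset.sum_range_succ]
      rw [hsplit]
      congr 1
      · apply Finset.sum_congr rfl
        intro j hj
        have hne : ¬ j = k - 1 := by rw [Finset.mem_range] at hj; omega
        simp only [hg, if_neg hne]
      · simp [hg]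
    have e2 : (∑ j ∈ Finset.Ico 3 k, ∑ i ∈ Finset.Ico 2 j, if s (v j) = v i then 1 else 0)
        = ∑ j ∈ Finset.range k, h j := by
      simp only [hh]
      apply Finset.sum_subset
      · intro i hi; rw [Finset.mem_range]; rw [Finset.mem_Ico] at hi; omega
      · intro j hj hne
        rw [Finset.mem_range] at hj
        rw [Finset.mem_Ico] at hne
        rw [Finset.Ico_eq_empty (by omega : ¬ 2 < j), Finset.sum_empty]
    have e3 : ∀ f : ℕ → ℕ, ∑ j ∈ Finset.range k, f j = f 0 + ∑ j ∈ Finset.Ico 1 k, f j :=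
      fun f => Finset.sum_range_eq_add_Ico f (by omega)
    have e4 : (∑ i ∈ Finset.Ico 2 k, if s (v 0) = v i then 1 else 0) = E := by
      rw [hE]
      exact dk_sum_indicator v _
        (hinj _ (by intro i hi; rw [Finset.mem_range]; rw [Finset.mem_Ico] at hi; omega)) _
    have e5 : g 0 = if s (v 0) = v 1 then 1 else 0 := by
      simp only [hg, if_neg (by omega : ¬ (0 : ℕ) = k - 1)]
    have e6 : h 0 = 0 := by
      simp only [hh]
      rw [Finset.Ico_eq_empty (by omega : ¬ 2 < 0), Finset.sum_empty]
    have e7 : (∑ j ∈ Finset.Ico 1 k, g j) + (∑ j ∈ Finset.Ico 1 k, h j)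
        = ∑ j ∈ Finset.Ico 1 k, T j := by
      rw [← Finset.sum_add_distrib]
      exact Finset.sum_congr rfl hgh
    rw [e1, e2, e4, e3 g, e3 h, e5, e6]
    omega
  rw [key]
  have hcard : (Finset.Ico 1 k).card = k - 1 := by rw [Nat.card_Ico]
  have hSsub : ∀ j, j < k → v j ∈ S :=
    fun j hj => Finset.mem_image.mpr ⟨j, Finset.mem_range.mpr hj, rfl⟩
  have hTS : ∀ j, 1 ≤ j → j < k → T j = 1 → s (v j) ∈ S := by
    intro j h1 h2 ht
    simp only [hT] at ht
    by_cases hmem : s (v j) ∈ (Hidx j).image v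
    · obtain ⟨i, hi, hvi⟩ := Finset.mem_image.mp hmem
      rw [← hvi]; exact hSsub i (Finset.mem_range.mp (Hsub j h1 h2 hi))
    · rw [if_neg hmem] at ht; omega
  have hTzero : ∀ j, 1 ≤ j → j < k → s (v j) ∉ S → T j = 0 := by
    intro j h1 h2 hns
    simp only [hT]
    rw [if_neg]
    intro hmem
    obtain ⟨i, hi, hvi⟩ := Finset.mem_image.mp hmem
    exact hns (hvi ▸ hSsub i (Finset.mem_range.mp (Hsub j h1 h2 hi)))
  have hinvS : ¬ (∀ j, j < k → s (v j) ∈ S) := by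
    intro hall
    have hSuniv : S = Finset.univ := by
      apply dk_invariant_univ C hnd hlen S ⟨v 0, hSsub 0 (by omega)⟩
      intro a ha
      obtain ⟨j, hj, rfl⟩ := Finset.mem_image.mp ha
      exact hall j (Finset.mem_range.mp hj)
    have h1 : S.card ≤ k :=
      le_trans Finset.card_image_le (by rw [Finset.card_range])
    rw [hSuniv, Finset.card_univ, Fintype.card_fin] at h1
    omega
  have hzsum := dk_sum_le_card_sub (Finset.Ico 1 k) T (fun j _ => hTle j)
  rw [hcard] at hzsum
  have hone01 : ∀ j, T j = 0 ∨ T j = 1 := by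
    intro j; have := hTle j; omega
  by_cases hE1 : s (v 0) ∈ (Finset.Ico 2 k).image v
  · have hEval : E = 1 := by rw [hE, if_pos hE1]
    obtain ⟨m, hm, hvm⟩ := Finset.mem_image.mp hE1
    rw [Finset.mem_Ico] at hm
    have hg0 : (if s (v 0) = v 1 then 1 else 0) = 0 := by
      rw [if_neg]
      intro hh1
      have : m = 1 := hv m 1 (by omega) (by omega) (by rw [hvm, hh1])
      omega
    rw [hg0, hEval]
    by_contra hcon
    push_neg at hcon
    have hZ1 : ((Finset.Ico 1 k).filter (fun j => T j = 0)).card ≤ 1 := by omega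
    by_cases hex : ∃ z, 1 ≤ z ∧ z < k ∧ s (v z) ∉ S
    · obtain ⟨z, hz1, hzk, hzout⟩ := hex
      have hTz : T z = 0 := hTzero z hz1 hzk hzout
      have hone : ∀ j, 1 ≤ j → j < k → j ≠ z → T j = 1 := by
        intro j h1 h2 hne
        rcases hone01 j with h0 | h1'
        · exfalso
          have hpair : ({j, z} : Finset ℕ)
              ⊆ (Finset.Ico 1 k).filter (fun j => T j = 0) := by
            intro i hi
            simp only [Finset.mem_insert, Finset.mem_singleton] at hi
            rcases hi with rfl | rfl
            · exact Finset.mem_filter.mpr ⟨Finset.mem_Ico.mpr ⟨h1, h2⟩, h0⟩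
            · exact Finset.mem_filter.mpr ⟨Finset.mem_Ico.mpr ⟨hz1, hzk⟩, hTz⟩
          have := Finset.card_le_card hpair
          rw [Finset.card_pair hne] at this
          omega
        · exact h1'
      have hhead : ∀ j, 1 ≤ j → j < k → j ≠ z → ∃ i ∈ Hidx j, s (v j) = v i := by
        intro j h1 h2 hne
        have ht := hone j h1 h2 hne
        simp only [hT] at ht
        by_cases hmem : s (v j) ∈ (Hidx j).image v
        · obtain ⟨i, hi, hvi⟩ := Finset.mem_image.mp hmem
          exact ⟨i, hi, hvi.symm⟩
        · rw [if_neg hmem] at ht; omega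
      have hchain : ∀ j, 1 ≤ j → j < z → s (v j) = v (j + 1) := by
        intro j
        induction j using Nat.strong_induction_on with
        | _ j IH =>
          intro h1 hjz
          have hjk : j < k := by omega
          have hjne : j ≠ k - 1 := by omega
          obtain ⟨i, hi, hsi⟩ := hhead j h1 hjk (by omega)
          simp only [hHidx, Finset.mem_insert, Finset.mem_Ico] at hi
          rcases hi with rfl | hi
          · rwa [if_neg hjne] at hsi
          · exfalso
            have hprev : s (v (i - 1)) = v i := by
              have := IH (i - 1) (by omega) (by omega) (by omega)
              rwa [show i - 1 + 1 = i by omega] at this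
            have heq : v j = v (i - 1) := s.injective (by rw [hsi, hprev])
            have := hv j (i - 1) (by omega) (by omega) heq
            omega
      set Ridx : Finset ℕ := insert 0 (Finset.Ico (z + 1) k) with hRidx
      have hRsub : Ridx ⊆ Finset.range k := by
        intro i hi
        simp only [hRidx, Finset.mem_insert, Finset.mem_Ico] at hi
        rw [Finset.mem_range]
        rcases hi with rfl | hi <;> omega
      have hRinv : ∀ a ∈ Ridx.image v, s a ∈ Ridx.image v := by
        intro a ha
        obtain ⟨j, hj, rfl⟩ := Finset.mem_image.mp ha
        simp only [hRidx, Finset.mem_insert, Finset.mem_Ico] at hj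
        rcases hj with rfl | hj
        · rw [← hvm]
          apply Finset.mem_image.mpr ⟨m, ?_, rfl⟩
          simp only [hRidx, Finset.mem_insert, Finset.mem_Ico]
          right
          refine ⟨?_, by omega⟩
          by_contra hmz
          push_neg at hmz
          have hc := hchain (m - 1) (by omega) (by omega)
          rw [show m - 1 + 1 = m by omega] at hc
          have heq : v 0 = v (m - 1) := s.injective (by rw [hc, hvm])
          have := hv 0 (m - 1) (by omega) (by omega) heq
          omega
        · obtain ⟨i, hi, hsi⟩ := hhead j (by omega) (by omega) (by omega)
          rw [hsi]
          apply Finset.mem_image.mpr ⟨i, ?_, rfl⟩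
          simp only [hHidx, Finset.mem_insert, Finset.mem_Ico] at hi
          simp only [hRidx, Finset.mem_insert, Finset.mem_Ico]
          rcases hi with rfl | hi
          · split_ifs with hjk1
            · left; rfl
            · right; omega
          · right
            refine ⟨?_, by omega⟩
            by_contra hiz
            push_neg at hiz
            have hc := hchain (i - 1) (by omega) (by omega)
            rw [show i - 1 + 1 = i by omega] at hc
            have heq : v j = v (i - 1) := s.injective (by rw [hsi, hc])
            have := hv j (i - 1) (by omega) (by omega) heq
            omega
      have hRuniv : Ridx.image v = Finset.univ := by
        apply dk_invariant_univ C hnd hlen _ ?_ hRinv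
        exact ⟨v 0, Finset.mem_image.mpr ⟨0, by
          simp only [hRidx]; exact Finset.mem_insert_self _ _, rfl⟩⟩
      have hv1 : v 1 ∈ Ridx.image v := by rw [hRuniv]; exact Finset.mem_univ _
      obtain ⟨i, hi, hvi⟩ := Finset.mem_image.mp hv1
      have hik : i < k := Finset.mem_range.mp (hRsub hi)
      have hi1 : i = 1 := hv i 1 hik (by omega) hvi
      subst hi1
      simp only [hRidx, Finset.mem_insert, Finset.mem_Ico] at hi
      omega
    · push_neg at hex
      apply hinvS
      intro j hj
      rcases Nat.eq_zero_or_pos j with rfl | hj1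
      · rw [← hvm]; exact hSsub m (by omega)
      · exact hex j hj1 hj
  · have hEval : E = 0 := by rw [hE, if_neg hE1]
    rw [hEval]
    by_cases hg1 : s (v 0) = v 1
    · rw [if_pos hg1]
      by_contra hcon
      push_neg at hcon
      apply hinvS
      intro j hj
      rcases Nat.eq_zero_or_pos j with rfl | hj1
      · rw [hg1]; exact hSsub 1 (by omega)
      · apply hTS j hj1 hj
        rcases hone01 j with h0 | h1
        · exfalso
          have hjZ : j ∈ (Finset.Ico 1 k).filter (fun j => T j = 0) :=
            Finset.mem_filter.mpr ⟨Finset.mem_Ico.mpr ⟨hj1, hj⟩, h0⟩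
          have := Finset.card_pos.mpr ⟨j, hjZ⟩
          omega
        · exact h1
    · rw [if_neg hg1]
      omega
end

section
/- Let S ⊆ V ∖ {s} with |S| = 2k + 1 odd, and let A' be a path-free subset of the arcs of the time-expanded graph D^T induced by S, i.e., A' contains no directed path passing through at least three distinct vertices of S (in the projection to V). Then for the time-expanded arc incidence vector x of any tour, Σ_{(u,v,θ)∈A'} x_{uv,θ} ≤ k. -/
/-- The time-expanded arcs traversed starting from `u` at time `θ` along a vertex list. -/
def arcsT {n : ℕ} (c : Fin n → Fin n → ℕ → ℕ) :
    Fin n → ℕ → List (Fin n) → List (Fin n × Fin n × ℕ)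
  | _, _, [] => []
  | u, θ, v :: rest => (u, v, θ) :: arcsT c v (θ + c u v θ) rest

/-- The time-expanded arcs of a tour (departing the source `0` at time 0). -/
def tourArcsT {n : ℕ} [NeZero n] (c : Fin n → Fin n → ℕ → ℕ) (L : List (Fin n)) :
    List (Fin n × Fin n × ℕ) :=
  arcsT c 0 0 (L.tail ++ [0])


/-- Key counting lemma: along a path with no repeated `S`-vertices, twice the number of
arcs in `A'` is at most the number of `S`-vertices visited (counting the start). -/
lemma aux_count {n : ℕ} (c : Fin n → Fin n → ℕ → ℕ) (S : Finset (Fin n))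
    (A' : Finset (Fin n × Fin n × ℕ))
    (hind : ∀ a ∈ A', a.1 ∈ S ∧ a.2.1 ∈ S)
    (hpf : ∀ (u v w : Fin n) (θ : ℕ),
      (u, v, θ) ∈ A' → (v, w, θ + c u v θ) ∈ A' → w = u) :
    ∀ (m : ℕ) (M : List (Fin n)), M.length ≤ m → ∀ (u : Fin n) (θ : ℕ),
      (u :: M).Pairwise (fun a b => a ∈ S → b ∈ S → a ≠ b) →
      2 * (arcsT c u θ M).countP (fun a => decide (a ∈ A')) ≤
        M.countP (fun v => decide (v ∈ S)) + (if u ∈ S then 1 else 0) := by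
  intro m
  induction m with
  | zero =>
    intro M hM u θ _
    have : M = [] := List.length_eq_zero_iff.mp (Nat.le_zero.mp hM)
    subst this
    simp [arcsT]
  | succ m ih =>
    intro M hM u θ hpw
    match M with
    | [] => simp [arcsT]
    | v :: rest =>
      by_cases h : (u, v, θ) ∈ A'
      · obtain ⟨hu, hv⟩ := hind _ h
        have key : 2 * (arcsT c v (θ + c u v θ) rest).countP (fun a => decide (a ∈ A')) ≤
            rest.countP (fun x => decide (x ∈ S)) := by
          match rest with
          | [] => simp [arcsT]
          | w :: rest' =>
            have hnw : (v, w, θ + c u v θ) ∉ A' := by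
              intro hw
              have hwu : w = u := hpf u v w θ h hw
              have hwS : w ∈ S := (hind _ hw).2
              have huw : u ∈ S → w ∈ S → u ≠ w :=
                (List.pairwise_cons.mp hpw).1 w (by simp)
              exact huw hu hwS hwu.symm
            have hpw' : (w :: rest').Pairwise (fun a b => a ∈ S → b ∈ S → a ≠ b) :=
              hpw.of_cons.of_cons
            have hlen : rest'.length ≤ m := by
              simp only [List.length_cons] at hM; omega
            have hih := ih rest' hlen w (θ + c u v θ + c v w (θ + c u v θ)) hpw'
            simp only [arcsT, List.countP_cons, decide_eq_true_eq] at *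
            rw [if_neg hnw]
            split_ifs at * <;> omega
        simp only [arcsT, List.countP_cons, decide_eq_true_eq] at *
        rw [if_pos h, if_pos hu, if_pos hv]
        omega
      · have hpw' : (v :: rest).Pairwise (fun a b => a ∈ S → b ∈ S → a ≠ b) :=
          hpw.of_cons
        have hlen : rest.length ≤ m := by
          simp only [List.length_cons] at hM; omega
        have hih := ih rest hlen v (θ + c u v θ) hpw'
        simp only [arcsT, List.countP_cons, decide_eq_true_eq] at *
        rw [if_neg h]
        split_ifs at * <;> omega

/-- For `S ⊆ V ∖ {s}` of odd size `2k + 1` and a path-free subset `A'`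
of the time-expanded arcs induced by `S` (no two consecutive arcs through three distinct
vertices of `S`), every tour uses at most `k` arcs of `A'`. -/
theorem odd_path_free_inequality (n θmax k : ℕ) [NeZero n]
    (c : Fin n → Fin n → ℕ → ℕ)
    (S : Finset (Fin n)) (hS0 : (0 : Fin n) ∉ S) (hcard : S.card = 2 * k + 1)
    (A' : Finset (Fin n × Fin n × ℕ))
    (hind : ∀ a ∈ A', a.1 ∈ S ∧ a.2.1 ∈ S)
    (hpf : ∀ (u v w : Fin n) (θ : ℕ),
      (u, v, θ) ∈ A' → (v, w, θ + c u v θ) ∈ A' → w = u)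
    (L : List (Fin n)) (hL : IsTour n L) (hfeas : tourArrival c L ≤ θmax) :
    (tourArcsT c L).countP (fun a => decide (a ∈ A')) ≤ k := by
  obtain ⟨hnd, hlen, hhead⟩ := hL
  have hL0 : L = 0 :: L.tail := by
    cases L with
    | nil => simp at hhead
    | cons a t =>
      simp only [List.head?_cons, Option.some.injEq] at hhead
      simp [hhead]
  set M : List (Fin n) := L.tail ++ [0] with hM
  have hndt : L.tail.Nodup := hnd.tail
  have hpw : ((0 : Fin n) :: M).Pairwise (fun a b => a ∈ S → b ∈ S → a ≠ b) := by
    have heq : ((0 : Fin n) :: M) = ((0 :: L.tail) ++ [0]) := by simp [hM]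
    rw [heq, List.pairwise_append]
    refine ⟨?_, by simp, ?_⟩
    · have hnd0 : ((0 : Fin n) :: L.tail).Nodup := by rw [← hL0]; exact hnd
      exact hnd0.pairwise_of_forall_ne (fun a _ b _ hab _ _ => hab)
    · intro a _ b hb
      simp only [List.mem_singleton] at hb
      subst hb
      exact fun _ h0S _ => hS0 h0S
  have hbound := aux_count c S A' hind hpf M.length M le_rfl 0 0 hpw
  rw [if_neg hS0] at hbound
  have hcount : M.countP (fun v => decide (v ∈ S)) ≤ S.card := by
    have h1 : M.countP (fun v => decide (v ∈ S)) =
        L.tail.countP (fun v => decide (v ∈ S)) := by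
      simp [hM, List.countP_append, hS0]
    have h2 : L.tail.countP (fun v => decide (v ∈ S)) =
        (L.tail.filter (fun v => decide (v ∈ S))).length := by
      rw [List.countP_eq_length_filter]
    have hf : (L.tail.filter (fun v => decide (v ∈ S))).Nodup := hndt.filter _
    have hsub : (L.tail.filter (fun v => decide (v ∈ S))).toFinset ⊆ S := by
      intro x hx
      rw [List.mem_toFinset, List.mem_filter] at hx
      exact of_decide_eq_true hx.2
    have h3 := List.toFinset_card_of_nodup hf
    have h4 := Finset.card_le_card hsub
    omega
  have : tourArcsT c L = arcsT c 0 0 M := rfl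
  rw [this]
  omega
end

section
/- For any nonempty S ⊆ V ∖ {s} and any tour T of the TDTSP, the number of arcs of T whose time-expanded embedding lies in A^T(S) (both endpoints projecting into S) is at most |S| − 1. -/
lemma arcsT_map_vertices {n : ℕ} (c : Fin n → Fin n → ℕ → ℕ) :
    ∀ (M : List (Fin n)) (u : Fin n) (θ : ℕ),
      (arcsT c u θ M).map (fun a => (a.1, a.2.1)) = (u :: M).zip M
  | [], _, _ => rfl
  | v :: rest, u, θ => by
      simp only [arcsT, List.map_cons, List.zip_cons_cons, arcsT_map_vertices c rest v]

section ConsecutivePairs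

variable {α : Type*} (p : α → Prop) [DecidablePred p]

lemma countP_zip_cons_le (u : α) (M : List α) :
    ((u :: M).zip M).countP (fun q => p q.1 ∧ p q.2) ≤ M.countP p :=
  calc ((u :: M).zip M).countP (fun q => p q.1 ∧ p q.2)
      ≤ ((u :: M).zip M).countP (fun q => p q.2) :=
        List.countP_mono_left fun _ _ h => by simp_all
    _ = (((u :: M).zip M).map Prod.snd).countP p := by
        rw [List.countP_map]; rfl
    _ = M.countP p := by rw [List.map_snd_zip (by simp)]

lemma countP_zip_cons_lt : ∀ (u : α) (M : List α), ¬ p u → (∃ x ∈ M, p x) →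
    ((u :: M).zip M).countP (fun q => p q.1 ∧ p q.2) < M.countP p
  | _, [], _, ⟨_, hx, _⟩ => absurd hx List.not_mem_nil
  | u, v :: rest, hu, hM => by
      simp only [List.zip_cons_cons, List.countP_cons]
      by_cases hv : p v
      · simpa [hu, hv] using Nat.lt_succ_of_le (countP_zip_cons_le p v rest)
      · have hrest : ∃ x ∈ rest, p x := by
          obtain ⟨x, hx, hpx⟩ := hM
          exact ⟨x, (List.mem_cons.1 hx).resolve_left (by rintro rfl; exact hv hpx), hpx⟩
        simpa [hu, hv] using countP_zip_cons_lt v rest hv hrest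

end ConsecutivePairs

lemma List.Nodup.countP_mem_le_card {α : Type*} [DecidableEq α] {M : List α} (h : M.Nodup)
    (S : Finset α) : M.countP (· ∈ S) ≤ S.card := by
  rw [List.countP_eq_length_filter, ← List.toFinset_card_of_nodup (h.filter _)]
  exact Finset.card_le_card fun x hx =>
    of_decide_eq_true (List.mem_filter.1 (List.mem_toFinset.1 hx)).2

lemma List.Nodup.mem_of_length_eq_card {α : Type*} [Fintype α] [DecidableEq α] {l : List α}
    (h : l.Nodup) (hl : l.length = Fintype.card α) (x : α) : x ∈ l := by
  have : l.toFinset = Finset.univ :=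
    Finset.eq_univ_of_card _ (by rw [List.toFinset_card_of_nodup h, hl])
  simp [← List.mem_toFinset, this]

theorem induced_arcs_bound_general (n : ℕ) [NeZero n] (c : Fin n → Fin n → ℕ → ℕ)
    (S : Finset (Fin n)) (hS0 : (0 : Fin n) ∉ S) (hne : S.Nonempty)
    (L : List (Fin n)) (hL : IsTour n L) :
    (tourArcsT c L).countP (fun a => decide (a.1 ∈ S ∧ a.2.1 ∈ S)) ≤ S.card - 1 := by
  obtain ⟨hnd, hlen, hhead⟩ := hL
  obtain ⟨t, rfl⟩ : ∃ t, L = 0 :: t := ⟨L.tail, (List.cons_head?_tail hhead).symm⟩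
  obtain ⟨s, hs⟩ := hne
  have hst : s ∈ t := by
    have := hnd.mem_of_length_eq_card (by rw [hlen, Fintype.card_fin]) s
    exact (List.mem_cons.1 this).resolve_left (by rintro rfl; exact hS0 hs)
  have hcount : (t ++ [0]).countP (· ∈ S) = t.countP (· ∈ S) := by simp [hS0]
  have hlt := countP_zip_cons_lt (· ∈ S) 0 (t ++ [0]) hS0 ⟨s, List.mem_append_left _ hst, hs⟩
  have hcard := (List.nodup_cons.1 hnd).2.countP_mem_le_card S
  rw [← arcsT_map_vertices c _ 0 0, List.countP_map, hcount] at hlt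
  exact Nat.le_sub_one_of_lt (hlt.trans_le hcard)

/-- For any nonempty `S ⊆ V ∖ {s}`, any tour uses at most `|S| − 1`
time-expanded arcs with both endpoints projecting into `S` (subtour elimination). -/
theorem induced_arcs_bound (n θmax : ℕ) [NeZero n] (c : Fin n → Fin n → ℕ → ℕ)
    (S : Finset (Fin n)) (hS0 : (0 : Fin n) ∉ S) (hne : S.Nonempty)
    (L : List (Fin n)) (hL : IsTour n L) (hfeas : tourArrival c L ≤ θmax) :
    (tourArcsT c L).countP (fun a => decide (a.1 ∈ S ∧ a.2.1 ∈ S)) ≤ S.card - 1 :=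
  induced_arcs_bound_general n c S hS0 hne L hL
end

section
/- Let S ⊆ V with s ∈ S, S ≠ V, and let θ̂ satisfy θ̂ ≥ max{θ : there exists a tour leaving S for the first time at time θ}. Then the lifted subtour elimination constraint Σ_{(u,v,θ): u∈S, v∉S, θ≤θ̂} x_{uv,θ} ≥ 1 is satisfied by the time-expanded incidence vector of every tour with arrival time at most θ^max. -/
lemma exists_mem_arcsT_leaving {n : ℕ} (c : Fin n → Fin n → ℕ → ℕ) (S : Finset (Fin n)) :
    ∀ (M : List (Fin n)) (u : Fin n) (θ : ℕ), u ∈ S → (∃ v ∈ M, v ∉ S) →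
      ∃ a ∈ arcsT c u θ M, a.1 ∈ S ∧ a.2.1 ∉ S
  | [], _, _, _, ⟨_, hv, _⟩ => absurd hv List.not_mem_nil
  | v :: rest, u, θ, hu, ⟨w, hw, hwS⟩ => by
    by_cases hv : v ∈ S
    · have hw_rest : w ∈ rest := (List.mem_cons.1 hw).resolve_left (by rintro rfl; exact hwS hv)
      obtain ⟨a, ha, hleave⟩ := exists_mem_arcsT_leaving c S rest v _ hv ⟨w, hw_rest, hwS⟩
      exact ⟨a, List.mem_cons_of_mem _ ha, hleave⟩
    · exact ⟨(u, v, θ), List.mem_cons_self, hu, hv⟩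

lemma IsTour.mem {n : ℕ} [NeZero n] {L : List (Fin n)} (hL : IsTour n L) (x : Fin n) : x ∈ L := by
  obtain ⟨hnd, hlen, -⟩ := hL
  have htoFinset : L.toFinset = Finset.univ := by
    apply Finset.eq_univ_of_card
    rw [List.toFinset_card_of_nodup hnd, hlen, Fintype.card_fin]
  simp [← List.mem_toFinset, htoFinset]

lemma IsTour.mem_tail_append_source {n : ℕ} [NeZero n] {L : List (Fin n)} (hL : IsTour n L)
    (x : Fin n) : x ∈ L.tail ++ [0] := by
  have hx := hL.mem x
  rw [List.eq_cons_of_mem_head? hL.2.2, List.mem_cons] at hx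
  rcases hx with rfl | hx
  · exact List.mem_append_right _ (List.mem_singleton_self _)
  · exact List.mem_append_left _ hx

lemma IsTour.exists_mem_tourArcsT_leaving {n : ℕ} [NeZero n] (c : Fin n → Fin n → ℕ → ℕ)
    {S : Finset (Fin n)} (hs : (0 : Fin n) ∈ S) (hSV : S ≠ Finset.univ) {L : List (Fin n)}
    (hL : IsTour n L) : ∃ a ∈ tourArcsT c L, a.1 ∈ S ∧ a.2.1 ∉ S := by
  obtain ⟨w, hwS⟩ : ∃ w, w ∉ S := by simpa [Finset.eq_univ_iff_forall] using hSV
  exact exists_mem_arcsT_leaving c S _ 0 0 hs ⟨w, hL.mem_tail_append_source w, hwS⟩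

/-- Let `s ∈ S ⊊ V` and let `θ̂` bound from above the time of the first
departure from `S` of every feasible tour.  Then the lifted subtour elimination
constraint `Σ_{u∈S, v∉S, θ≤θ̂} x_{uv,θ} ≥ 1` holds for every tour with arrival time at
most `θ^max`. -/
theorem lifted_subtour_elimination (n θmax : ℕ) [NeZero n]
    (c : Fin n → Fin n → ℕ → ℕ)
    (S : Finset (Fin n)) (hs : (0 : Fin n) ∈ S) (hSV : S ≠ Finset.univ)
    (θhat : ℕ)
    (hθhat : ∀ L : List (Fin n), IsTour n L → tourArrival c L ≤ θmax →
      ∀ a : Fin n × Fin n × ℕ,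
        (tourArcsT c L).find? (fun a => decide (a.1 ∈ S ∧ a.2.1 ∉ S)) = some a →
        a.2.2 ≤ θhat) :
    ∀ L : List (Fin n), IsTour n L → tourArrival c L ≤ θmax →
      1 ≤ (tourArcsT c L).countP
        (fun a => decide (a.1 ∈ S ∧ a.2.1 ∉ S ∧ a.2.2 ≤ θhat)) := by
  intro L hL hArr
  obtain ⟨a, ha, hleave⟩ := hL.exists_mem_tourArcsT_leaving c hs hSV
  obtain ⟨b, hfirst⟩ : ∃ b, (tourArcsT c L).find?
      (fun a => decide (a.1 ∈ S ∧ a.2.1 ∉ S)) = some b := by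
    rw [← Option.isSome_iff_exists, List.find?_isSome]
    exact ⟨a, ha, decide_eq_true hleave⟩
  have hb_leave : b.1 ∈ S ∧ b.2.1 ∉ S := by simpa using List.find?_some hfirst
  refine List.countP_pos_iff.2 ⟨b, List.mem_of_find?_eq_some hfirst, ?_⟩
  exact decide_eq_true ⟨hb_leave.1, hb_leave.2, hθhat L hL hArr b hfirst⟩
end
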